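/- Let A be the adjacency matrix of a DSRG with parameters (n,k,t,λ,μ) respecting a homogeneous partition π with a cells of size b (ab = n), and suppose the π-join M₁(A) is a DSRG. Then for all i,l ∈ {1,…,a}, the number of darts from cell C_i to any fixed vertex v ∈ C_l is independent of v and equals λ+b−k if i = l, and μ if i ≠ l. Equivalently, U_i·A = (λ+b−k)U_i + μ(J − U_i). -/

import Mathlib

open Matrix

/-- The all-ones matrix. -/
def onesMat (n : ℕ) : Matrix (Fin n) (Fin n) ℝ := Matrix.of fun _ _ => 1

/-- The all-ones matrix indexed by blocks. -/
def Jbig (N n : ℕ) : Matrix (Fin N × Fin n) (Fin N × Fin n) ℝ := Matrix.of fun _ _ => 1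

/-- `Ublk a b i`: columns in the `i`-th cell are all-ones, other entries zero. -/
def Ublk (a b : ℕ) (i : ℕ) : Matrix (Fin (a * b)) (Fin (a * b)) ℝ :=
  Matrix.of fun _ c => if (c : ℕ) / b = i then 1 else 0

/-- The π-join of `A` in power `j`: the block-circulant matrix of block order
`j*a+1` whose first block-row is `(A, U₁,…,U₁, U₂,…,U₂, …, U_a,…,U_a)`,
each `Uᵢ` repeated `j` times. -/
def Mjoin (a b j : ℕ) (A : Matrix (Fin (a * b)) (Fin (a * b)) ℝ) :
    Matrix (Fin (j * a + 1) × Fin (a * b)) (Fin (j * a + 1) × Fin (a * b)) ℝ :=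
  fun p q =>
    if q.1 - p.1 = 0 then A p.2 q.2
    else Ublk a b ((((q.1 - p.1 : Fin (j * a + 1)) : ℕ) - 1) / j) p.2 q.2

/-!
Write `M = M₁(A)` as a matrix of blocks and compare the first block-row of both sides of
`M² = t̃ I + λ̃ M + μ̃ (J - I - M)`. Since `Uᵢ Uⱼ = b Uⱼ` and `A Uᵢ = k Uᵢ`, and since for fixed `q`
the cell indices `(q - e) - 1` of the blocks `M_{e q}`, `e ≠ q`, run once through all cells, the
`(0,0)` block of `M²` is `A² + bJ` and its `(0,i+1)` block is `k Uᵢ + Uᵢ A + b (J - Uᵢ)`.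
The `(0,0)` block, read off at an edge and at a non-edge of `A` (which exist as `k ≠ 0` and
`t ≠ k`), gives `λ̃ = λ + b` and `μ̃ = μ + b`; the `(0,i+1)` block then determines `Uᵢ A`.
-/

open Finset

lemma Fin.sum_erase_sub_val_pred {N : ℕ} {β : Type*} [AddCommMonoid β] (f : ℕ → β)
    (q : Fin (N + 1)) :
    ∑ e ∈ univ.erase q, f ((q - e : Fin (N + 1)) - 1) = ∑ x ∈ range N, f x := by
  calc ∑ e ∈ univ.erase q, f ((q - e : Fin (N + 1)) - 1)
      = ∑ x ∈ Ioi 0, f ((x : Fin (N + 1)) - 1) :=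
        sum_nbij' (q - ·) (q - ·)
          (by simp [sub_eq_zero, eq_comm])
          (by simp only [mem_Ioi, mem_erase, mem_univ, and_true, ne_eq, sub_eq_self]
              exact fun x hx => hx.ne')
          (by simp) (by simp) (by simp)
    _ = ∑ x ∈ range N, f x := by simp [Fin.sum_univ_eq_sum_range f]

lemma sum_row_eq_of_mul_onesMat {n k : ℕ} {A : Matrix (Fin n) (Fin n) ℝ}
    (hAJ : A * onesMat n = (k : ℝ) • onesMat n) (r : Fin n) : ∑ s, A r s = k := by
  simpa [mul_apply, onesMat] using congrFun (congrFun hAJ r) r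

section Cells

variable {a b : ℕ}

lemma Ublk_apply (i : ℕ) (r c : Fin (a * b)) :
    Ublk a b i r c = if (c : ℕ) / b = i then 1 else 0 := rfl

lemma card_filter_val_div_eq {i : ℕ} (hi : i < a) :
    #{s : Fin (a * b) | (s : ℕ) / b = i} = b := by
  rw [← card_map finProdFinEquiv.symm.toEmbedding]
  convert card_product ({⟨i, hi⟩} : Finset (Fin a)) (univ : Finset (Fin b)) using 2
  · ext ⟨x, y⟩
    simp [Fin.ext_iff, eq_comm, Nat.add_mul_div_left _ _ y.pos, Nat.div_eq_of_lt y.isLt]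
  · simp

lemma val_div_lt (c : Fin (a * b)) : (c : ℕ) / b < a :=
  Nat.div_lt_of_lt_mul (mul_comm a b ▸ c.isLt)

lemma Ublk_mul_Ublk {i : ℕ} (hi : i < a) (j : ℕ) :
    Ublk a b i * Ublk a b j = (b : ℝ) • Ublk a b j := by
  ext r c
  simp [mul_apply, Ublk_apply, sum_boole, card_filter_val_div_eq hi]

lemma sum_range_Ublk {N : ℕ} (haN : a ≤ N) :
    ∑ j ∈ range N, Ublk a b j = onesMat (a * b) := by
  ext r c
  simp [Matrix.sum_apply, Ublk_apply, onesMat, (val_div_lt c).trans_le haN]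

lemma mul_Ublk {k : ℕ} {A : Matrix (Fin (a * b)) (Fin (a * b)) ℝ}
    (hAJ : A * onesMat (a * b) = (k : ℝ) • onesMat (a * b)) (i : ℕ) :
    A * Ublk a b i = (k : ℝ) • Ublk a b i := by
  ext r c
  simp [mul_apply, Ublk_apply, sum_row_eq_of_mul_onesMat hAJ]

end Cells

section Blocks

variable {a b : ℕ}

def piJoinBlocks (a b : ℕ) :
    Matrix (Fin (1 * a + 1) × Fin (a * b)) (Fin (1 * a + 1) × Fin (a * b)) ℝ ≃ₐ[ℝ]
      Matrix (Fin (1 * a + 1)) (Fin (1 * a + 1)) (Matrix (Fin (a * b)) (Fin (a * b)) ℝ) :=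
  (compAlgEquiv _ _ ℝ ℝ).symm

lemma piJoinBlocks_apply
    (M : Matrix (Fin (1 * a + 1) × Fin (a * b)) (Fin (1 * a + 1) × Fin (a * b)) ℝ)
    (p q : Fin (1 * a + 1)) (r c : Fin (a * b)) :
    piJoinBlocks a b M p q r c = M (p, r) (q, c) := rfl

lemma piJoinBlocks_Jbig (a b : ℕ) :
    piJoinBlocks a b (Jbig (1 * a + 1) (a * b)) = of fun _ _ => onesMat (a * b) := rfl

lemma piJoinBlocks_Mjoin (A : Matrix (Fin (a * b)) (Fin (a * b)) ℝ) :
    piJoinBlocks a b (Mjoin a b 1 A)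
      = of fun p q => if q = p then A else Ublk a b ((q - p : Fin (1 * a + 1)) - 1) := by
  ext p q r c
  by_cases h : q = p <;> simp [piJoinBlocks_apply, Mjoin, h, sub_eq_zero]

lemma val_sub_one_lt {e : Fin (1 * a + 1)} (he : e ≠ 0) : (e : ℕ) - 1 < a := by
  have := Fin.val_ne_zero_iff.mpr he
  have := e.isLt
  omega

lemma piJoinBlocks_Mjoin_mul_of_ne (A : Matrix (Fin (a * b)) (Fin (a * b)) ℝ)
    {e : Fin (1 * a + 1)} (he : e ≠ 0) (q : Fin (1 * a + 1)) (heq : e ≠ q) :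
    piJoinBlocks a b (Mjoin a b 1 A) 0 e * piJoinBlocks a b (Mjoin a b 1 A) e q
      = (b : ℝ) • Ublk a b ((q - e : Fin (1 * a + 1)) - 1) := by
  simp [piJoinBlocks_Mjoin, he, Ne.symm heq, Ublk_mul_Ublk (val_sub_one_lt he)]

lemma piJoinBlocks_Mjoin_sq_zero_zero (A : Matrix (Fin (a * b)) (Fin (a * b)) ℝ) :
    piJoinBlocks a b (Mjoin a b 1 A * Mjoin a b 1 A) 0 0
      = A * A + (b : ℝ) • onesMat (a * b) := by
  rw [map_mul, mul_apply, ← add_sum_erase _ _ (mem_univ 0),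
    sum_congr rfl fun e he => piJoinBlocks_Mjoin_mul_of_ne A (ne_of_mem_erase he) 0
      (ne_of_mem_erase he),
    ← smul_sum, Fin.sum_erase_sub_val_pred (Ublk a b), sum_range_Ublk (by simp)]
  simp [piJoinBlocks_Mjoin]

lemma piJoinBlocks_Mjoin_sq_zero_of_ne_zero {k : ℕ} {A : Matrix (Fin (a * b)) (Fin (a * b)) ℝ}
    (hAJ : A * onesMat (a * b) = (k : ℝ) • onesMat (a * b)) {d : Fin (1 * a + 1)} (hd : d ≠ 0) :
    piJoinBlocks a b (Mjoin a b 1 A * Mjoin a b 1 A) 0 d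
      = (k : ℝ) • Ublk a b (d - 1) + Ublk a b (d - 1) * A
        + (b : ℝ) • (onesMat (a * b) - Ublk a b (d - 1)) := by
  have hd0 : d ∈ univ.erase 0 := mem_erase.2 ⟨hd, mem_univ d⟩
  have h0d : 0 ∈ univ.erase d := mem_erase.2 ⟨hd.symm, mem_univ 0⟩
  rw [map_mul, mul_apply, ← add_sum_erase _ _ (mem_univ 0), ← add_sum_erase _ _ hd0,
    sum_congr rfl fun e he => piJoinBlocks_Mjoin_mul_of_ne A
      (ne_of_mem_erase (mem_of_mem_erase he)) d (ne_of_mem_erase he),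
    ← smul_sum, erase_right_comm, sum_erase_eq_sub h0d, Fin.sum_erase_sub_val_pred (Ublk a b),
    sum_range_Ublk (by simp)]
  simp [piJoinBlocks_Mjoin, hd, mul_Ublk hAJ, add_assoc]

end Blocks

section Adjacency

variable {n : ℕ} {A : Matrix (Fin n) (Fin n) ℝ}

lemma exists_ne_apply_eq_one {k : ℕ} (h01 : ∀ i j, A i j = 0 ∨ A i j = 1)
    (hdiag : ∀ i, A i i = 0) (hAJ : A * onesMat n = (k : ℝ) • onesMat n) (hk : k ≠ 0)
    (r : Fin n) :
    ∃ c, r ≠ c ∧ A r c = 1 := by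
  obtain ⟨c, -, hc⟩ := exists_ne_zero_of_sum_ne_zero
    (by rw [sum_row_eq_of_mul_onesMat hAJ r]; exact_mod_cast hk)
  exact ⟨c, fun h => hc (h ▸ hdiag r), (h01 r c).resolve_left hc⟩

lemma exists_ne_apply_eq_zero {k t l m : ℕ} (h01 : ∀ i j, A i j = 0 ∨ A i j = 1)
    (hdiag : ∀ i, A i i = 0) (hAJ : A * onesMat n = (k : ℝ) • onesMat n)
    (hA2 : A * A = (t : ℝ) • (1 : Matrix (Fin n) (Fin n) ℝ) + (l : ℝ) • A
            + (m : ℝ) • (onesMat n - 1 - A))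
    (htk : t ≠ k) (r : Fin n) :
    ∃ s, s ≠ r ∧ A s r = 0 := by
  by_contra! h
  -- with no zero off the diagonal in column `r`, the diagonal entry `t` of `A²` is the row sum `k`
  have hcol : ∀ s, A r s * A s r = A r s := fun s => by
    rcases eq_or_ne s r with rfl | hs
    · simp [hdiag]
    · simp [(h01 s r).resolve_left (h s hs)]
  have hrr : (k : ℝ) = t := by
    simpa [mul_apply, hcol, sum_row_eq_of_mul_onesMat hAJ, hdiag, onesMat]
      using congrFun (congrFun hA2 r) r
  exact htk (by exact_mod_cast hrr.symm)

lemma coeffs_eq_of_smul_add_smul_eq {x y z x' y' z' : ℝ}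
    (h : x • 1 + y • A + z • (onesMat n - 1 - A) = x' • 1 + y' • A + z' • (onesMat n - 1 - A))
    {r c : Fin n} (hrc : r ≠ c) (hA1 : A r c = 1) {s u : Fin n} (hsu : s ≠ u) (hA0 : A s u = 0) :
    y = y' ∧ z = z' := by
  constructor
  · simpa [one_apply_ne hrc, hA1, onesMat] using congrFun (congrFun h r) c
  · simpa [one_apply_ne hsu, hA0, onesMat] using congrFun (congrFun h s) u

end Adjacency

theorem pijoin_quotient_matrix_general (a b k t l m : ℕ) (hb : 0 < b)
    (A : Matrix (Fin (a * b)) (Fin (a * b)) ℝ)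
    (h01 : ∀ i j, A i j = 0 ∨ A i j = 1)
    (hdiag : ∀ i, A i i = 0)
    (hAJ : A * onesMat (a * b) = (k : ℝ) • onesMat (a * b))
    (hA2 : A * A = (t : ℝ) • (1 : Matrix (Fin (a * b)) (Fin (a * b)) ℝ) + (l : ℝ) • A
            + (m : ℝ) • (onesMat (a * b) - 1 - A))
    (htk : t < k)
    (ttil ltil mtil : ℕ)
    (hM2 : Mjoin a b 1 A * Mjoin a b 1 A
            = (ttil : ℝ) • (1 : Matrix (Fin (1 * a + 1) × Fin (a * b))
                (Fin (1 * a + 1) × Fin (a * b)) ℝ)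
              + (ltil : ℝ) • Mjoin a b 1 A
              + (mtil : ℝ) • (Jbig (1 * a + 1) (a * b) - 1 - Mjoin a b 1 A)) :
    ∀ i : ℕ, i < a →
      Ublk a b i * A = ((l : ℝ) + (b : ℝ) - (k : ℝ)) • Ublk a b i
        + (m : ℝ) • (onesMat (a * b) - Ublk a b i) := by
  intro i hi
  have hblocks := congrArg (piJoinBlocks a b) hM2
  simp only [map_add, map_sub, map_smul, map_one, piJoinBlocks_Jbig] at hblocks
  let d : Fin (1 * a + 1) := ⟨i + 1, by omega⟩
  have hd : d ≠ 0 := Fin.ne_of_val_ne (Nat.succ_ne_zero i)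
  have h00 : A * A + (b : ℝ) • onesMat (a * b)
      = (ttil : ℝ) • 1 + (ltil : ℝ) • A + (mtil : ℝ) • (onesMat (a * b) - 1 - A) := by
    simpa [piJoinBlocks_Mjoin_sq_zero_zero, piJoinBlocks_Mjoin]
      using congrFun (congrFun hblocks 0) 0
  have h0d : (k : ℝ) • Ublk a b i + Ublk a b i * A + (b : ℝ) • (onesMat (a * b) - Ublk a b i)
      = (ltil : ℝ) • Ublk a b i + (mtil : ℝ) • (onesMat (a * b) - Ublk a b i) := by
    simpa [piJoinBlocks_Mjoin_sq_zero_of_ne_zero hAJ hd, piJoinBlocks_Mjoin, hd, d]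
      using congrFun (congrFun hblocks 0) d
  let r : Fin (a * b) := ⟨0, Nat.mul_pos (by omega) hb⟩
  obtain ⟨c, hrc, hA1⟩ := exists_ne_apply_eq_one h01 hdiag hAJ (by omega) r
  obtain ⟨s, hsr, hA0⟩ := exists_ne_apply_eq_zero h01 hdiag hAJ hA2 htk.ne r
  obtain ⟨hl, hm⟩ := coeffs_eq_of_smul_add_smul_eq (x := t + b) (y := l + b) (z := m + b)
    (by rw [← h00, hA2]; module) hrc hA1 hsr hA0
  rw [← hl, ← hm] at h0d
  linear_combination (norm := module) h0d

/-- If the π-join `M₁(A)` of a DSRG is a DSRG, then the number of darts from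
cell `Cᵢ` to any fixed vertex of `Cₗ` is `λ+b−k` if `i = l` and `μ` otherwise;
equivalently `Uᵢ·A = (λ+b−k)Uᵢ + μ(J − Uᵢ)`. -/
theorem pijoin_quotient_matrix (a b k t l m : ℕ) (ha : 0 < a) (hb : 0 < b)
    (A : Matrix (Fin (a * b)) (Fin (a * b)) ℝ)
    (h01 : ∀ i j, A i j = 0 ∨ A i j = 1)
    (hdiag : ∀ i, A i i = 0)
    (hAJ : A * onesMat (a * b) = (k : ℝ) • onesMat (a * b))
    (hJA : onesMat (a * b) * A = (k : ℝ) • onesMat (a * b))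
    (hA2 : A * A = (t : ℝ) • (1 : Matrix (Fin (a * b)) (Fin (a * b)) ℝ) + (l : ℝ) • A
            + (m : ℝ) • (onesMat (a * b) - 1 - A))
    (hlt : l < t) (htk : t < k) (hm0 : 0 < m) (hmt : m ≤ t)
    (ntil ktil ttil ltil mtil : ℕ)
    (hcard : ntil = Fintype.card (Fin (1 * a + 1) × Fin (a * b)))
    (hMJ : Mjoin a b 1 A * Jbig (1 * a + 1) (a * b)
            = (ktil : ℝ) • Jbig (1 * a + 1) (a * b))
    (hJM : Jbig (1 * a + 1) (a * b) * Mjoin a b 1 A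
            = (ktil : ℝ) • Jbig (1 * a + 1) (a * b))
    (hM2 : Mjoin a b 1 A * Mjoin a b 1 A
            = (ttil : ℝ) • (1 : Matrix (Fin (1 * a + 1) × Fin (a * b))
                (Fin (1 * a + 1) × Fin (a * b)) ℝ)
              + (ltil : ℝ) • Mjoin a b 1 A
              + (mtil : ℝ) • (Jbig (1 * a + 1) (a * b) - 1 - Mjoin a b 1 A))
    (hlttil : ltil < ttil) (htktil : ttil < ktil) (hm0til : 0 < mtil) (hmttil : mtil ≤ ttil) :
    ∀ i : ℕ, i < a →
      Ublk a b i * A = ((l : ℝ) + (b : ℝ) - (k : ℝ)) • Ublk a b i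
        + (m : ℝ) • (onesMat (a * b) - Ublk a b i) :=
  pijoin_quotient_matrix_general a b k t l m hb A h01 hdiag hAJ hA2 htk ttil ltil mtil hM2
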